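/- arXiv:1801.03055 — 4 statements merged into one kernel-verified Lean document; each statement's English description precedes it below -/
import Mathlib

section
/- (Crossover window bound.) Let A and B be RNA structures of length n with Nussinov–Jacobson energy with parameter C > 0, bp(AΔB) > 0, and set R = 0.001987 and T₀ = 310. If p₁ and p₂ are both real numbers at which exp(−E(A|M(p))/(R·T₀)) ≥ (1/9)·exp(−E(B|M(p))/(R·T₀)) and exp(−E(B|M(p))/(R·T₀)) ≥ (1/9)·exp(−E(A|M(p))/(R·T₀)), then |p₁ − p₂| ≤ R·T₀·ln 9 / (C·bp(AΔB)). -/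
-- An RNA structure of length `n` is `A : Fin n → Bool`; `A i = true` means `i` is paired.
/-- `bp A` = number of paired nucleotides of `A`. -/
def bp {n : ℕ} (A : Fin n → Bool) : ℕ :=
  (Finset.univ.filter fun i => A i = true).card

/-- `bpd A B` = number of positions paired in `A` but not in `B`. -/
def bpd {n : ℕ} (A B : Fin n → Bool) : ℕ :=
  (Finset.univ.filter fun i => A i = true ∧ B i = false).card

/-- `bps A B` = bp(A Δ B) = bp(A−B) + bp(B−A). -/
def bps {n : ℕ} (A B : Fin n → Bool) : ℕ := bpd A B + bpd B A

/-- The noiseless data sequence of a structure: 0 at paired positions, 1 at unpaired. -/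
def dat {n : ℕ} (A : Fin n → Bool) : Fin n → ℝ := fun i => if A i then 0 else 1

/-- Mixed data `M(p)` for structures `A`, `B`. -/
def mixd {n : ℕ} (A B : Fin n → Bool) (p : ℝ) : Fin n → ℝ :=
  fun i => p * dat A i + (1 - p) * dat B i

/-- Nussinov–Jacobson energy of structure `A` with parameter `C` and data `M`. -/
noncomputable def njE {n : ℕ} (C : ℝ) (A : Fin n → Bool) (M : Fin n → ℝ) : ℝ :=
  -(bp A : ℝ) + C * ∑ i, |(if A i then (0 : ℝ) else 1) - M i|

/-!
Every position where `A` and `B` agree contributes nothing to either energy's data term, and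
every position where they differ contributes `1 - p` to the data term of `A` and `p` to that of
`B`. Hence on `[0,1]` the energy difference `E(A | M(p)) - E(B | M(p))` is affine in `p` with
slope `-2·C·bp(AΔB)`. Both Boltzmann-ratio conditions at `p` say that this difference lies in
`[-R·T₀·ln 9, R·T₀·ln 9]`, an interval of length `2·R·T₀·ln 9`, which the affine function
leaves once `p` moves by more than `R·T₀·ln 9 / (C·bp(AΔB))`.
-/

open Real

theorem sum_abs_dat_sub_dat {n : ℕ} (A B : Fin n → Bool) :
    ∑ i, |dat A i - dat B i| = (bps A B : ℝ) := by
  rw [bps, bpd, bpd]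
  push_cast
  rw [← Finset.sum_boole, ← Finset.sum_boole, ← Finset.sum_add_distrib]
  refine Finset.sum_congr rfl fun i _ => ?_
  cases hA : A i <;> cases hB : B i <;> simp [dat, hA, hB]

theorem njE_left_mixd {n : ℕ} (C : ℝ) (A B : Fin n → Bool) (p : ℝ) :
    njE C A (mixd A B p) = -(bp A : ℝ) + C * (|1 - p| * bps A B) := by
  have h : ∀ i, |dat A i - mixd A B p i| = |1 - p| * |dat A i - dat B i| := fun i => by
    rw [← abs_mul]; congr 1; simp only [mixd]; ring
  rw [njE, ← sum_abs_dat_sub_dat, Finset.mul_sum _ _ |1 - p|]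
  simp only [← h]
  rfl

theorem njE_right_mixd {n : ℕ} (C : ℝ) (A B : Fin n → Bool) (p : ℝ) :
    njE C B (mixd A B p) = -(bp B : ℝ) + C * (|p| * bps A B) := by
  have h : ∀ i, |dat B i - mixd A B p i| = |p| * |dat A i - dat B i| := fun i => by
    rw [← abs_mul, ← abs_neg]; congr 1; simp only [mixd]; ring
  rw [njE, ← sum_abs_dat_sub_dat, Finset.mul_sum _ _ |p|]
  simp only [← h]
  rfl

theorem njE_sub_njE_mixd {n : ℕ} (C : ℝ) (A B : Fin n → Bool) {p : ℝ}
    (hp : p ∈ Set.Icc (0 : ℝ) 1) :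
    njE C A (mixd A B p) - njE C B (mixd A B p) =
      (bp B - bp A + C * bps A B) - 2 * (C * bps A B) * p := by
  rw [njE_left_mixd, njE_right_mixd, abs_of_nonneg (sub_nonneg.2 hp.2), abs_of_nonneg hp.1]
  ring

theorem sub_le_mul_log_of_exp_ge {T k a b : ℝ} (hT : 0 < T) (hk : 0 < k)
    (h : exp (-a / T) ≥ 1 / k * exp (-b / T)) : a - b ≤ T * log k := by
  rw [← exp_log hk, one_div, ← exp_neg, ← exp_add, ge_iff_le, exp_le_exp] at h
  have h' : (a - b) / T ≤ log k := by rw [sub_div]; linarith [neg_div T a, neg_div T b]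
  rwa [div_le_iff₀' hT] at h'

theorem abs_sub_le_mul_log_of_exp_ge {T k a b : ℝ} (hT : 0 < T) (hk : 0 < k)
    (hab : exp (-a / T) ≥ 1 / k * exp (-b / T)) (hba : exp (-b / T) ≥ 1 / k * exp (-a / T)) :
    |a - b| ≤ T * log k :=
  abs_sub_le_iff.2 ⟨sub_le_mul_log_of_exp_ge hT hk hab, sub_le_mul_log_of_exp_ge hT hk hba⟩

theorem abs_sub_le_div_of_abs_sub_two_mul_le {c m L x y : ℝ} (hm : 0 < m)
    (hx : |c - 2 * m * x| ≤ L) (hy : |c - 2 * m * y| ≤ L) : |x - y| ≤ L / m := by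
  rw [le_div_iff₀ hm, ← abs_of_pos hm, ← abs_mul, abs_le]
  constructor <;> cases abs_le.1 hx <;> cases abs_le.1 hy <;> linarith

/-- Crossover window bound: any two points `p₁, p₂` of the crossover window (points of
`[0,1]` where both Boltzmann-ratio conditions hold) satisfy
`|p₁ − p₂| ≤ R·T₀·ln 9 / (C·bp(AΔB))`, with `R = 0.001987`, `T₀ = 310`. -/
theorem nj_crossover_window_bound {n : ℕ} (A B : Fin n → Bool) (C : ℝ) (hC : 0 < C)
    (hs : 0 < bps A B) (p₁ p₂ : ℝ)
    (hp₁ : p₁ ∈ Set.Icc (0 : ℝ) 1) (hp₂ : p₂ ∈ Set.Icc (0 : ℝ) 1)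
    (h₁a : Real.exp (-njE C A (mixd A B p₁) / (0.001987 * 310)) ≥
      (1 / 9) * Real.exp (-njE C B (mixd A B p₁) / (0.001987 * 310)))
    (h₁b : Real.exp (-njE C B (mixd A B p₁) / (0.001987 * 310)) ≥
      (1 / 9) * Real.exp (-njE C A (mixd A B p₁) / (0.001987 * 310)))
    (h₂a : Real.exp (-njE C A (mixd A B p₂) / (0.001987 * 310)) ≥
      (1 / 9) * Real.exp (-njE C B (mixd A B p₂) / (0.001987 * 310)))
    (h₂b : Real.exp (-njE C B (mixd A B p₂) / (0.001987 * 310)) ≥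
      (1 / 9) * Real.exp (-njE C A (mixd A B p₂) / (0.001987 * 310))) :
    |p₁ - p₂| ≤ 0.001987 * 310 * Real.log 9 / (C * (bps A B : ℝ)) := by
  have hRT : (0 : ℝ) < 0.001987 * 310 := by norm_num
  have w₁ := abs_sub_le_mul_log_of_exp_ge hRT (by norm_num) h₁a h₁b
  have w₂ := abs_sub_le_mul_log_of_exp_ge hRT (by norm_num) h₂a h₂b
  rw [njE_sub_njE_mixd C A B hp₁] at w₁
  rw [njE_sub_njE_mixd C A B hp₂] at w₂
  have hCs : 0 < C * (bps A B : ℝ) := mul_pos hC (Nat.cast_pos.2 hs)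
  exact abs_sub_le_div_of_abs_sub_two_mul_le hCs w₁ w₂
end

section
/- For every ε > 0 there exist δ > 0 and a natural number K such that for all natural numbers k ≥ K and all real α with 0 ≤ α ≤ δ/√k, one has ∑_{j=0}^{⌊(1/2 − α)·k⌋} C(k,j) ≥ 2^{k−1}·(1 − ε), where C(k,j) denotes the binomial coefficient. -/
lemma cb_sq_bound (n : ℕ) : (2*n+1) * Nat.centralBinom n ^ 2 ≤ 16 ^ n := by
  induction n with
  | zero => simp [Nat.centralBinom]
  | succ n ih =>
    have key := Nat.succ_mul_centralBinom_succ n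
    have hsq : ((n+1) * Nat.centralBinom (n+1))^2
        = 4*(2*n+1)^2 * Nat.centralBinom n ^ 2 := by rw [key]; ring
    have hmain : (n+1)^2 * ((2*(n+1)+1) * Nat.centralBinom (n+1) ^ 2)
        ≤ (n+1)^2 * 16^(n+1) := by
      calc (n+1)^2 * ((2*(n+1)+1) * Nat.centralBinom (n+1) ^ 2)
          = (2*n+3) * ((n+1) * Nat.centralBinom (n+1))^2 := by ring
        _ = (2*n+3) * (4*(2*n+1)^2 * Nat.centralBinom n ^ 2) := by rw [hsq]
        _ ≤ 16*(n+1)^2 * ((2*n+1) * Nat.centralBinom n ^ 2) := by nlinarith [Nat.centralBinom_pos n]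
        _ ≤ 16*(n+1)^2 * 16^n := by exact Nat.mul_le_mul_left _ ih
        _ = (n+1)^2 * 16^(n+1) := by ring
    exact Nat.le_of_mul_le_mul_left hmain (by positivity)

lemma middle_choose_sq (k : ℕ) : k * (k.choose (k/2))^2 ≤ 4 ^ k := by
  rcases Nat.even_or_odd k with ⟨n, hn⟩ | ⟨n, hn⟩
  · subst hn
    have h2 : (n+n)/2 = n := by omega
    have : n + n = 2 * n := by ring
    rw [h2, this]
    calc 2*n * ((2*n).choose n)^2 ≤ (2*n+1) * Nat.centralBinom n ^2 := by
          rw [Nat.centralBinom_eq_two_mul_choose]; exact Nat.mul_le_mul_right _ (by omega)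
      _ ≤ 16^n := cb_sq_bound n
      _ ≤ 4^(2*n) := by rw [pow_mul]; norm_num
  · subst hn
    have h2 : (2*n+1)/2 = n := by omega
    rw [h2]
    have hle : (2*n+1).choose n ≤ 2 * Nat.centralBinom n := by
      have hsymm : (2*n+1).choose n = (2*n+1).choose (n+1) := by
        have h := Nat.choose_symm (show n ≤ 2*n+1 by omega)
        have : 2*n+1-n = n+1 := by omega
        rw [this] at h; exact h.symm
      have hp : (2*n+1).choose (n+1) = (2*n).choose n + (2*n).choose (n+1) :=
        Nat.choose_succ_succ (2*n) n
      have hmid : (2*n).choose (n+1) ≤ (2*n).choose n := by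
        have := Nat.choose_le_middle (n+1) (2*n)
        rwa [Nat.mul_div_cancel_left n (by norm_num)] at this
      rw [hsymm, hp, Nat.centralBinom_eq_two_mul_choose]; omega
    calc (2*n+1) * ((2*n+1).choose n)^2 ≤ (2*n+1) * (2*Nat.centralBinom n)^2 := by
          exact Nat.mul_le_mul_left _ (Nat.pow_le_pow_left hle 2)
      _ = 4 * ((2*n+1) * Nat.centralBinom n ^2) := by ring
      _ ≤ 4 * 16^n := Nat.mul_le_mul_left _ (cb_sq_bound n)
      _ = 4^(2*n+1) := by rw [pow_succ, pow_mul]; ring_nf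



lemma middle_choose_sqrt (k : ℕ) : (k.choose (k/2) : ℝ) * Real.sqrt k ≤ 2 ^ k := by
  have h := middle_choose_sq k
  have hR : (k:ℝ) * (k.choose (k/2) : ℝ)^2 ≤ 4 ^ k := by exact_mod_cast h
  have hs := Real.sq_sqrt (show (0:ℝ) ≤ k by positivity)
  have h1 : ((k.choose (k/2) : ℝ) * Real.sqrt k)^2 ≤ ((2:ℝ)^k)^2 := by
    have : ((2:ℝ)^k)^2 = 4^k := by rw [← pow_mul, mul_comm, pow_mul]; norm_num
    rw [this]; nlinarith [Real.sqrt_nonneg (k:ℝ)]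
  have h2 : (0:ℝ) ≤ (k.choose (k/2) : ℝ) * Real.sqrt k := by positivity
  calc (k.choose (k/2) : ℝ) * Real.sqrt k
      = Real.sqrt (((k.choose (k/2) : ℝ) * Real.sqrt k)^2) := (Real.sqrt_sq h2).symm
    _ ≤ Real.sqrt (((2:ℝ)^k)^2) := Real.sqrt_le_sqrt h1
    _ = 2^k := Real.sqrt_sq (by positivity)

lemma half_sum (k : ℕ) : 2^k ≤ 2 * ∑ j ∈ Finset.range (k/2 + 1), k.choose j := by
  have htot : ∑ j ∈ Finset.range (k+1), k.choose j = 2^k := Nat.sum_range_choose k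
  set m := k/2 with hm
  have hmk : m + 1 ≤ k + 1 := by omega
  have hsplit : ∑ j ∈ Finset.range (k+1), k.choose j
      = (∑ j ∈ Finset.range (m+1), k.choose j) + ∑ j ∈ Finset.Ico (m+1) (k+1), k.choose j := by
    rw [Finset.range_eq_Ico, Finset.range_eq_Ico]
    exact (Finset.sum_Ico_consecutive _ (Nat.zero_le _) hmk).symm
  have hrefl : ∑ j ∈ Finset.Ico (m+1) (k+1), k.choose j
      = ∑ i ∈ Finset.range (k - m), k.choose (k - i) := by
    apply Finset.sum_nbij' (fun j => k - j) (fun i => k - i)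
    · intro j hj; simp only [Finset.mem_Ico] at hj; simp only [Finset.mem_range]; omega
    · intro i hi; simp only [Finset.mem_range] at hi; simp only [Finset.mem_Ico]; omega
    · intro j hj; simp only [Finset.mem_Ico] at hj; omega
    · intro i hi; simp only [Finset.mem_range] at hi; omega
    · intro j hj; simp only [Finset.mem_Ico] at hj
      rw [show k - (k - j) = j by omega]
  have hle : ∑ i ∈ Finset.range (k - m), k.choose (k - i)
      ≤ ∑ j ∈ Finset.range (m+1), k.choose j := by
    have heq : ∀ i ∈ Finset.range (k - m), k.choose (k - i) = k.choose i := by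
      intro i hi; simp only [Finset.mem_range] at hi
      exact Nat.choose_symm (by omega)
    rw [Finset.sum_congr rfl heq]
    apply Finset.sum_le_sum_of_subset
    apply Finset.range_subset_range.mpr; omega
  omega

/-- Quantitative central-limit estimate: for every `ε > 0` there are `δ > 0` and `K` such
that for all `k ≥ K` and all `0 ≤ α ≤ δ/√k`, the sum of the binomial coefficients
`C(k,j)` for `j` from `0` to `⌊(1/2 − α)k⌋` is at least `2^{k−1}(1 − ε)`. -/


theorem binomial_lower_half_mass (ε : ℝ) (hε : 0 < ε) :
    ∃ δ : ℝ, 0 < δ ∧ ∃ K : ℕ, ∀ k : ℕ, K ≤ k → ∀ α : ℝ, 0 ≤ α →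
      α ≤ δ / Real.sqrt k →
      (2 : ℝ) ^ (k - 1) * (1 - ε) ≤
        ∑ j ∈ Finset.range (⌊(1 / 2 - α) * (k : ℝ)⌋₊ + 1), (k.choose j : ℝ) := by
  refine ⟨ε/4, by positivity, ⌈(4/ε)^2⌉₊ + 1, ?_⟩
  intro k hk α hα hαδ
  set t := ⌊(1/2 - α) * (k:ℝ)⌋₊ with ht
  set m := k/2 with hm
  have hk1 : 1 ≤ k := by omega
  have hkR : (1:ℝ) ≤ (k:ℝ) := by exact_mod_cast hk1
  have hsk : 0 < Real.sqrt k := Real.sqrt_pos.mpr (by linarith)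
  have hsk4 : 4/ε ≤ Real.sqrt k := by
    have h1 : (4/ε)^2 ≤ (⌈(4/ε)^2⌉₊ : ℝ) := Nat.le_ceil _
    have h2 : ((⌈(4/ε)^2⌉₊ : ℕ) : ℝ) ≤ (k:ℝ) := by exact_mod_cast Nat.le_of_succ_le hk
    have : 4/ε ≤ Real.sqrt ((4/ε)^2) := by
      rw [Real.sqrt_sq (by positivity)]
    exact this.trans (Real.sqrt_le_sqrt (by linarith))
  have hεsk : 1 / Real.sqrt k ≤ ε/4 := by
    rw [div_le_iff₀ hsk]
    rw [div_le_iff₀ hε] at hsk4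
    nlinarith
  have htm : t ≤ m := by
    have : (1/2 - α) * (k:ℝ) ≤ (k:ℝ)/2 := by nlinarith
    have h := Nat.floor_mono this
    rwa [show ((k:ℝ)/2) = (k:ℝ)/(2:ℕ) by norm_num, Nat.floor_div_natCast, Nat.floor_natCast] at h
  -- lower bound for the half sum
  have hSm : (2:ℝ)^k ≤ 2 * ∑ j ∈ Finset.range (m+1), (k.choose j : ℝ) := by
    have := half_sum k
    exact_mod_cast this
  -- split
  have hsplit : ∑ j ∈ Finset.range (m+1), (k.choose j : ℝ)
      = (∑ j ∈ Finset.range (t+1), (k.choose j : ℝ))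
        + ∑ j ∈ Finset.Ico (t+1) (m+1), (k.choose j : ℝ) := by
    rw [Finset.range_eq_Ico, Finset.range_eq_Ico]
    exact (Finset.sum_Ico_consecutive _ (Nat.zero_le _) (by omega)).symm
  -- tail bound
  have hterm : ∀ j ∈ Finset.Ico (t+1) (m+1), (k.choose j : ℝ) ≤ (k.choose m : ℝ) := by
    intro j _; exact_mod_cast Nat.choose_le_middle j k
  have htail : ∑ j ∈ Finset.Ico (t+1) (m+1), (k.choose j : ℝ)
      ≤ ((m:ℝ) - t) * (k.choose m : ℝ) := by
    have h := Finset.sum_le_card_nsmul _ _ _ hterm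
    rw [Nat.card_Ico, nsmul_eq_mul] at h
    have : ((m + 1 - (t+1) : ℕ) : ℝ) = (m:ℝ) - t := by
      rw [show m + 1 - (t+1) = m - t by omega, Nat.cast_sub htm]
    rwa [this] at h
  have hcb : (k.choose m : ℝ) ≤ 2^k / Real.sqrt k := by
    rw [le_div_iff₀ hsk]; exact middle_choose_sqrt k
  have hmt : (m:ℝ) - t ≤ α * k + 1 := by
    have h1 : (m:ℝ) ≤ (k:ℝ)/2 := by
      have := Nat.cast_div_le (α := ℝ) (m := k) (n := 2)
      simpa using this
    have h2 : (1/2 - α) * (k:ℝ) < (t:ℝ) + 1 := Nat.lt_floor_add_one _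
    nlinarith
  have hαk : α * k ≤ (ε/4) * Real.sqrt k := by
    have h1 : α * k ≤ (ε/4) / Real.sqrt k * k := by
      apply mul_le_mul_of_nonneg_right hαδ (by positivity)
    have h2 : (ε/4) / Real.sqrt k * k = (ε/4) * ((k:ℝ) / Real.sqrt k) := by ring
    have h3 : (k:ℝ) / Real.sqrt k = Real.sqrt k := Real.div_sqrt
    rw [h2, h3] at h1; exact h1
  have hcbnn : (0:ℝ) ≤ (k.choose m : ℝ) := by positivity
  have htail2 : ∑ j ∈ Finset.Ico (t+1) (m+1), (k.choose j : ℝ)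
      ≤ ((ε/4) * Real.sqrt k + 1) * (2^k / Real.sqrt k) := by
    calc ∑ j ∈ Finset.Ico (t+1) (m+1), (k.choose j : ℝ)
        ≤ ((m:ℝ) - t) * (k.choose m : ℝ) := htail
      _ ≤ ((ε/4) * Real.sqrt k + 1) * (k.choose m : ℝ) := by
          apply mul_le_mul_of_nonneg_right (by linarith) hcbnn
      _ ≤ ((ε/4) * Real.sqrt k + 1) * (2^k / Real.sqrt k) := by
          apply mul_le_mul_of_nonneg_left hcb (by positivity)
  have hpow : (2:ℝ)^k = 2^(k-1) * 2 := by
    rw [← pow_succ]; congr 1; omega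
  have hpos : (0:ℝ) < 2^(k-1) := by positivity
  have hfinal : ((ε/4) * Real.sqrt k + 1) * (2^k / Real.sqrt k) ≤ ε * 2^(k-1) := by
    have hexp : ((ε/4) * Real.sqrt k + 1) * (2^k / Real.sqrt k)
        = (ε/4) * 2^k + (1 / Real.sqrt k) * 2^k := by
      field_simp
    rw [hexp]
    have h2 : (1 / Real.sqrt k) * 2^k ≤ (ε/4) * 2^k := by
      apply mul_le_mul_of_nonneg_right hεsk (by positivity)
    nlinarith
  linarith [hsplit, htail2, hSm, hfinal]
end

section
/- (Case 1 of the main theorem.) Fix q ∈ (0,1), let C_q be any positive constant with C_q < 2q(1−q), set R = 0.001987, T₀ = 310, and C_n* = R·T₀·ln 9 / (0.3·C_q·n). Consider random structures A, B of length n whose 2n pairedness indicators are independent Bernoulli(q). Then for every ε > 0 there exists N such that for all n ≥ N and all C with 0 < C ≤ C_n*, the probability that bp(A−B) ≤ (1/2 − C/4)·bp(AΔB) or bp(B−A) ≤ (1/2 − C/4)·bp(AΔB) is at least 1 − ε. (When bp(AΔB) > 0 this event is exactly the event that the crossover point p* lies outside the open interval (0.25, 0.75).) -/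
/-- Weight of a pair of structures under the product Bernoulli(q) model: each of the `2n`
pairedness indicators is independently `true` with probability `q`. -/
noncomputable def pairWeight (q : ℝ) (n : ℕ) (AB : (Fin n → Bool) × (Fin n → Bool)) : ℝ :=
  (∏ i, if AB.1 i then q else 1 - q) * (∏ i, if AB.2 i then q else 1 - q)

open Classical in
/-- Probability of an event `P` on pairs of random structures of length `n` under the
product Bernoulli(q) model. -/
noncomputable def pairProb (q : ℝ) (n : ℕ)
    (P : (Fin n → Bool) × (Fin n → Bool) → Prop) : ℝ :=
  ∑ AB : (Fin n → Bool) × (Fin n → Bool), if P AB then pairWeight q n AB else 0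

namespace NJaux

open Finset Filter

variable (q : ℝ)

variable (q : ℝ)

noncomputable def binom (n k : ℕ) : ℝ := (n.choose k : ℝ) * q ^ k * (1 - q) ^ (n - k)

lemma binom_nonneg (hq : q ∈ Set.Ioo (0:ℝ) 1) (n k : ℕ) : 0 ≤ binom q n k := by
  obtain ⟨h0, h1⟩ := hq
  have : (0:ℝ) ≤ 1 - q := by linarith
  unfold binom; positivity

lemma binom_zero (n : ℕ) : binom q n 0 = (1 - q) ^ n := by simp [binom]

lemma binom_of_lt {n k : ℕ} (h : n < k) : binom q n k = 0 := by
  simp [binom, Nat.choose_eq_zero_of_lt h]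

lemma binom_pascal (n k : ℕ) :
    binom q (n+1) (k+1) = q * binom q n k + (1 - q) * binom q n (k+1) := by
  rcases le_or_gt (k+1) n with h | h
  · unfold binom
    have h1 : n + 1 - (k+1) = n - k := by omega
    have h2 : n - k = (n - (k+1)) + 1 := by omega
    rw [Nat.choose_succ_succ, h1, h2]
    push_cast
    ring
  · rw [binom_of_lt q h]
    rcases eq_or_lt_of_le (Nat.succ_le_of_lt h) with h' | h'
    · have hk : k = n := by omega
      subst hk
      unfold binom
      simp [pow_succ]
      ring
    · rw [binom_of_lt q (by omega), binom_of_lt q (by omega)]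
      ring

lemma binom_sum (n : ℕ) : ∑ k ∈ range (n+1), binom q n k = 1 := by
  have := add_pow q (1-q) n
  simp only [add_sub_cancel, one_pow] at this
  rw [this]
  unfold binom
  exact Finset.sum_congr rfl (fun k _ => by ring)

noncomputable def Mx (n : ℕ) : ℝ := (range (n+1)).sup' ⟨0, by simp⟩ (binom q n)

lemma Mx_nonneg (hq : q ∈ Set.Ioo (0:ℝ) 1) (n : ℕ) : 0 ≤ Mx q n :=
  le_trans (binom_nonneg q hq n 0) (Finset.le_sup' _ (by simp))

lemma le_Mx (hq : q ∈ Set.Ioo (0:ℝ) 1) (n k : ℕ) : binom q n k ≤ Mx q n := by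
  rcases le_or_gt k n with h | h
  · exact Finset.le_sup' _ (by simp [Finset.mem_range]; omega)
  · rw [binom_of_lt q h]; exact Mx_nonneg q hq n

lemma Mx_antitone (hq : q ∈ Set.Ioo (0:ℝ) 1) : Antitone (Mx q) := by
  apply antitone_nat_of_succ_le
  intro n
  apply Finset.sup'_le
  intro k hk
  cases k with
  | zero =>
    have : binom q (n+1) 0 = (1-q) * binom q n 0 := by simp [binom, pow_succ]; ring
    rw [this]
    have h1 : (0:ℝ) ≤ 1 - q := by linarith [hq.2]
    calc (1-q) * binom q n 0 ≤ 1 * Mx q n :=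
          mul_le_mul (by linarith [hq.1]) (le_Mx q hq n 0) (binom_nonneg q hq n 0) zero_le_one
      _ = Mx q n := one_mul _
  | succ k =>
    rw [binom_pascal]
    calc q * binom q n k + (1-q) * binom q n (k+1)
        ≤ q * Mx q n + (1-q) * Mx q n := by
          have h1 : (0:ℝ) ≤ 1 - q := by linarith [hq.2]
          have h2 : (0:ℝ) ≤ q := le_of_lt hq.1
          exact add_le_add (mul_le_mul_of_nonneg_left (le_Mx q hq n k) h2)
            (mul_le_mul_of_nonneg_left (le_Mx q hq n (k+1)) h1)
      _ = Mx q n := by ring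

lemma Mx_tendsto_zero (hq : q ∈ Set.Ioo (0:ℝ) 1) :
    Tendsto (Mx q) atTop (nhds 0) := by
  have hanti := Mx_antitone q hq
  have hbdd : BddBelow (Set.range (Mx q)) :=
    ⟨0, by rintro x ⟨n, rfl⟩; exact Mx_nonneg q hq n⟩
  have htend := tendsto_atTop_ciInf hanti hbdd
  set L := ⨅ n, Mx q n with hLdef
  have hL0 : 0 ≤ L := le_ciInf (fun n => Mx_nonneg q hq n)
  have hLle : ∀ n, L ≤ Mx q n := fun n => ciInf_le hbdd n
  rcases eq_or_lt_of_le hL0 with h0 | hpos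
  · rwa [← h0] at htend
  exfalso
  clear_value L
  clear hLdef hbdd hanti
  obtain ⟨hq0, hq1⟩ := hq
  set c := min q (1-q) with hc
  have hc0 : 0 < c := lt_min hq0 (by linarith)
  have hcq : c ≤ q := min_le_left _ _
  have hcq' : c ≤ 1 - q := min_le_right _ _
  clear_value c
  clear hc
  set G : ℕ → ℝ := fun j => (2/c)^j - 1 with hGdef
  have h2c : (1:ℝ) ≤ 2/c := by
    rw [le_div_iff₀ hc0]; linarith
  have hGpow : ∀ j, (1:ℝ) ≤ (2/c)^j := fun j => one_le_pow₀ h2c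
  have hG0 : ∀ j, 0 ≤ G j := fun j => by simp only [hGdef]; linarith [hGpow j]
  have hGmono : Monotone G := fun a b hab => by
    simp only [hGdef]
    have := pow_le_pow_right₀ (by linarith : (1:ℝ) ≤ 2/c) hab
    linarith
  have hGstep : ∀ j, G j + 1 ≤ c * G (j+1) := by
    intro j
    simp only [hGdef]
    have hp : (2/c)^(j+1) = (2/c)^j * (2/c) := pow_succ _ _
    rw [hp]
    have h1 : c * ((2/c)^j * (2/c)) = 2 * (2/c)^j := by field_simp
    rw [mul_sub, h1]
    have := hGpow j
    nlinarith [hc0.le, hcq, hcq', hq1]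
  have hG00 : G 0 = 0 := by simp [hGdef]
  clear hGdef
  clear_value G
  set J := Nat.ceil (2/L) + 1 with hJ
  have hJge : (2/L : ℝ) ≤ (J:ℝ) := by
    rw [hJ]
    push_cast
    linarith [Nat.le_ceil (2/L)]
  clear_value J
  clear hJ
  have hGJ1 : (0:ℝ) < G J + 1 := by linarith [hG0 J]
  set η := (L/2) / (G J + 1) with hη
  have hη0 : 0 < η := div_pos (by linarith) hGJ1
  have hηProd : η * (G J + 1) = L/2 := by rw [hη]; field_simp
  clear_value η
  clear hη
  have hηG : ∀ j, j ≤ J → η * G j ≤ L/2 := by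
    intro j hj
    have h2 : G j ≤ G J + 1 := by linarith [hGmono hj]
    have h3 : η * G j ≤ η * (G J + 1) := mul_le_mul_of_nonneg_left h2 hη0.le
    linarith
  -- find n₀
  have hev1 : ∀ᶠ n in atTop, Mx q n < L + η := htend.eventually_lt_const (by linarith)
  have hev2 : ∀ᶠ n in atTop, (1-q)^n < L/2 := by
    have := tendsto_pow_atTop_nhds_zero_of_lt_one (by linarith : (0:ℝ) ≤ 1-q) (by linarith)
    exact this.eventually_lt_const (by linarith)
  obtain ⟨n₀, hn₀⟩ := (hev1.and hev2).exists_forall_of_atTop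
  have hMle : ∀ n, n₀ ≤ n → Mx q n < L + η := fun n hn => (hn₀ n hn).1
  have hsmall : ∀ n, n₀ ≤ n → (1-q)^n < L/2 := fun n hn => (hn₀ n hn).2
  -- extraction step
  have extract : ∀ j, j + 1 ≤ J → ∀ n, n₀ ≤ n → ∀ (a b x y : ℝ), c ≤ a → 0 ≤ b → a + b = 1 →
      L - η * G j ≤ a*x + b*y → y ≤ L + η → L - η * G (j+1) ≤ x := by
    intro j hjJ n hn a b x y hca hb hab h1 h2
    have ha0 : 0 < a := lt_of_lt_of_le hc0 hca
    have hGj1 : G j + 1 ≤ a * G (j+1) := by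
      have := hGstep j
      nlinarith [hG0 (j+1)]
    have hax : a * (L - η * G (j+1)) ≤ a * x := by
      have hby : b * y ≤ b * (L + η) := mul_le_mul_of_nonneg_left h2 hb
      nlinarith [hη0.le, hG0 j]
    exact le_of_mul_le_mul_left hax ha0
  -- descent
  have key : ∀ j, j ≤ J → ∀ n, n₀ ≤ n → ∃ k, ∀ i, i ≤ j → L - η * G j ≤ binom q n (k+i) := by
    intro j
    induction j with
    | zero =>
      intro _ n hn
      obtain ⟨k, _, hke⟩ := Finset.exists_mem_eq_sup'
        (⟨0, by simp⟩ : (range (n+1)).Nonempty) (binom q n)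
      refine ⟨k, fun i hi => ?_⟩
      interval_cases i
      rw [hG00, Nat.add_zero]
      have hb : L ≤ binom q n k := by rw [← hke]; exact hLle n
      linarith
    | succ j ih =>
      intro hjJ n hn
      obtain ⟨k, hk⟩ := ih (by omega) (n+1) (by omega)
      have hlev : L/2 ≤ L - η * G j := by linarith [hηG j (by omega)]
      have hkpos : k ≠ 0 := by
        intro h0
        have h1 := hk 0 (Nat.zero_le _)
        rw [h0] at h1
        simp only [Nat.add_zero] at h1
        rw [binom_zero] at h1
        have hs := hsmall (n+1) (by omega)
        linarith
      obtain ⟨k', rfl⟩ : ∃ k', k = k'+1 := ⟨k-1, by omega⟩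
      have hMb : ∀ m, binom q n m ≤ L + η :=
        fun m => le_trans (le_Mx q ⟨hq0, hq1⟩ n m) (hMle n hn).le
      refine ⟨k', fun i hi => ?_⟩
      rcases Nat.lt_or_ge i (j+1) with hij | hij
      · -- i ≤ j : use pascal at (k'+i)+1
        have h1 := hk i (by omega)
        have e : k'+1+i = (k'+i)+1 := by omega
        rw [e, binom_pascal] at h1
        exact extract j (by omega) n hn q (1-q) _ _ hcq (by linarith) (by ring) h1
          (hMb (k'+i+1))
      · -- i = j+1
        have hi' : i = j+1 := by omega
        subst hi'
        have h1 := hk j (le_refl j)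
        have e : k'+1+j = (k'+j)+1 := by omega
        rw [e, binom_pascal] at h1
        have h1' : L - η * G j ≤ (1-q) * binom q n (k'+(j+1)) + q * binom q n (k'+j) := by
          have e2 : k'+j+1 = k'+(j+1) := by omega
          rw [e2] at h1
          linarith
        exact extract j (by omega) n hn (1-q) q _ _ hcq' (by linarith) (by ring) h1'
          (hMb (k'+j))
  -- contradiction
  obtain ⟨k, hk⟩ := key J le_rfl n₀ le_rfl
  have hhalf : ∀ i, i ≤ J → L/2 ≤ binom q n₀ (k+i) := by
    intro i hi
    have := hηG J le_rfl
    linarith [hk i hi]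
  have hidx : ∀ i, i ≤ J → k + i ≤ n₀ := by
    intro i hi
    by_contra hcon
    have := binom_of_lt q (show n₀ < k + i by omega)
    have := hhalf i hi
    linarith
  have hsum1 : ((J:ℝ)+1) * (L/2) ≤ ∑ i ∈ range (J+1), binom q n₀ (k+i) := by
    calc ((J:ℝ)+1) * (L/2) = ∑ _i ∈ range (J+1), (L/2) := by
          rw [Finset.sum_const, Finset.card_range]; push_cast; ring
      _ ≤ _ := Finset.sum_le_sum (fun i hi => hhalf i (by simpa using Nat.lt_succ_iff.mp (Finset.mem_range.mp hi)))
  have hsum2 : ∑ i ∈ range (J+1), binom q n₀ (k+i) ≤ 1 := by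
    have himg : ∑ i ∈ range (J+1), binom q n₀ (k+i)
        = ∑ m ∈ (range (J+1)).image (fun i => k + i), binom q n₀ m := by
      rw [Finset.sum_image]
      intro a _ b _ h
      simp only at h
      omega
    rw [himg, ← binom_sum q n₀]
    apply Finset.sum_le_sum_of_subset_of_nonneg
    · intro m hm
      obtain ⟨i, hi, rfl⟩ := Finset.mem_image.mp hm
      have : i ≤ J := Nat.lt_succ_iff.mp (Finset.mem_range.mp hi)
      exact Finset.mem_range.mpr (by have := hidx i this; omega)
    · intro m _ _
      exact binom_nonneg q ⟨hq0, hq1⟩ n₀ m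
  have hLL : (2/L) * (L/2) = 1 := by field_simp
  nlinarith [hsum1, hsum2, hpos]

noncomputable def W {n : ℕ} (A : Fin n → Bool) : ℝ := ∏ i, if A i then q else 1 - q

lemma W_nonneg (hq : q ∈ Set.Ioo (0:ℝ) 1) {n : ℕ} (A : Fin n → Bool) : 0 ≤ W q A := by
  apply Finset.prod_nonneg
  intro i _
  by_cases h : A i <;> simp [h] <;> [skip; linarith [hq.2]]
  exact hq.1.le

lemma bp_cons {n : ℕ} (b : Bool) (A : Fin n → Bool) :
    bp (Fin.cons b A) = (if b then 1 else 0) + bp A := by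
  unfold bp
  rw [Finset.card_filter, Finset.card_filter, Fin.sum_univ_succ]
  simp

lemma W_cons {n : ℕ} (b : Bool) (A : Fin n → Bool) :
    W q (Fin.cons b A) = (if b then q else 1 - q) * W q A := by
  unfold W
  rw [Fin.prod_univ_succ]
  simp

lemma sum_fun_succ {n : ℕ} (f : (Fin (n+1) → Bool) → ℝ) :
    ∑ A : Fin (n+1) → Bool, f A = ∑ p : Bool × (Fin n → Bool), f (Fin.cons p.1 p.2) := by
  rw [← Fintype.sum_equiv (Fin.consEquiv (fun _ : Fin (n+1) => Bool))
    (fun p => f (Fin.cons p.1 p.2)) f (fun p => rfl)]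

lemma sum_W_bp (n k : ℕ) :
    (∑ A : Fin n → Bool, if bp A = k then W q A else 0) = binom q n k := by
  induction n generalizing k with
  | zero =>
    have hthis : ∀ A : Fin 0 → Bool, (if bp A = k then W q A else 0) = (if k = 0 then 1 else 0) := by
      intro A
      have hbp : bp A = 0 := by simp [bp]
      have hW : W q A = 1 := by simp [W]
      rw [hbp, hW]
      by_cases h : k = 0
      · simp [h]
      · rw [if_neg (by omega), if_neg h]
    rw [Finset.sum_congr rfl (fun A _ => hthis A), Finset.sum_const]
    have hcard : (Finset.univ : Finset (Fin 0 → Bool)).card = 1 := by simp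
    rw [hcard]
    cases k with
    | zero => simp [binom]
    | succ k => simp [binom]
  | succ n ih =>
    rw [sum_fun_succ, Fintype.sum_prod_type, Fintype.sum_bool]
    have e1 : ∀ A : Fin n → Bool, bp (Fin.cons true A) = 1 + bp A := fun A => by
      rw [bp_cons]; simp
    have e2 : ∀ A : Fin n → Bool, bp (Fin.cons false A) = bp A := fun A => by
      rw [bp_cons]; simp
    have e3 : ∀ A : Fin n → Bool, W q (Fin.cons true A) = q * W q A := fun A => by
      rw [W_cons]; simp
    have e4 : ∀ A : Fin n → Bool, W q (Fin.cons false A) = (1-q) * W q A := fun A => by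
      rw [W_cons]; simp
    simp only [e1, e2, e3, e4]
    cases k with
    | zero =>
      have h1 : (∑ A : Fin n → Bool, if 1 + bp A = 0 then q * W q A else 0) = 0 := by
        apply Finset.sum_eq_zero; intro A _; rw [if_neg (by omega)]
      have h2 : (∑ A : Fin n → Bool, if bp A = 0 then (1-q) * W q A else 0)
          = (1-q) * binom q n 0 := by
        rw [← ih 0, Finset.mul_sum]
        apply Finset.sum_congr rfl; intro A _
        by_cases h : bp A = 0
        · rw [if_pos h, if_pos h]
        · rw [if_neg h, if_neg h, mul_zero]
      rw [h1, h2]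
      simp only [binom, pow_succ, Nat.choose_zero_right, Nat.sub_zero]
      push_cast
      ring
    | succ k =>
      have h1 : (∑ A : Fin n → Bool, if 1 + bp A = k + 1 then q * W q A else 0)
          = q * binom q n k := by
        rw [← ih k, Finset.mul_sum]
        apply Finset.sum_congr rfl; intro A _
        by_cases h : bp A = k
        · rw [if_pos (by omega), if_pos h]
        · rw [if_neg (by omega), if_neg h, mul_zero]
      have h2 : (∑ A : Fin n → Bool, if bp A = k + 1 then (1-q) * W q A else 0)
          = (1-q) * binom q n (k+1) := by
        rw [← ih (k+1), Finset.mul_sum]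
        apply Finset.sum_congr rfl; intro A _
        by_cases h : bp A = k + 1
        · rw [if_pos h, if_pos h]
        · rw [if_neg h, if_neg h, mul_zero]
      rw [h1, h2, binom_pascal]

lemma bp_le {n : ℕ} (A : Fin n → Bool) : bp A ≤ n := by
  have := Finset.card_filter_le (Finset.univ : Finset (Fin n)) (fun i => A i = true)
  simpa [bp] using this

lemma sum_W_one (n : ℕ) : ∑ A : Fin n → Bool, W q A = 1 := by
  have : ∀ A : Fin n → Bool, W q A
      = ∑ k ∈ range (n+1), if bp A = k then W q A else 0 := by
    intro A
    rw [Finset.sum_ite_eq (range (n+1)) (bp A) (fun _ => W q A)]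
    rw [if_pos (Finset.mem_range.mpr (Nat.lt_succ_of_le (bp_le A)))]
  calc ∑ A : Fin n → Bool, W q A
      = ∑ A : Fin n → Bool, ∑ k ∈ range (n+1), if bp A = k then W q A else 0 :=
        Finset.sum_congr rfl (fun A _ => this A)
    _ = ∑ k ∈ range (n+1), ∑ A : Fin n → Bool, if bp A = k then W q A else 0 :=
        Finset.sum_comm
    _ = ∑ k ∈ range (n+1), binom q n k :=
        Finset.sum_congr rfl (fun k _ => sum_W_bp q n k)
    _ = 1 := binom_sum q n

lemma pairWeight_eq {n : ℕ} (AB : (Fin n → Bool) × (Fin n → Bool)) :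
    pairWeight q n AB = W q AB.1 * W q AB.2 := rfl

lemma pairWeight_nonneg (hq : q ∈ Set.Ioo (0:ℝ) 1) {n : ℕ} (AB) :
    0 ≤ pairWeight q n AB :=
  mul_nonneg (W_nonneg q hq _) (W_nonneg q hq _)

lemma sum_pairWeight (n : ℕ) : ∑ AB : (Fin n → Bool) × (Fin n → Bool), pairWeight q n AB = 1 := by
  rw [Fintype.sum_prod_type]
  simp only [pairWeight_eq]
  rw [← Finset.sum_mul_sum]
  rw [sum_W_one q n]
  norm_num

lemma pairProb_compl {n : ℕ} (P : (Fin n → Bool) × (Fin n → Bool) → Prop) :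
    pairProb q n P = 1 - pairProb q n (fun AB => ¬ P AB) := by
  classical
  have : pairProb q n P + pairProb q n (fun AB => ¬ P AB) = 1 := by
    unfold pairProb
    rw [← Finset.sum_add_distrib, ← sum_pairWeight q n]
    apply Finset.sum_congr rfl
    intro AB _
    by_cases h : P AB <;> simp [h]
  linarith

lemma pairProb_le_sum_fibers (hq : q ∈ Set.Ioo (0:ℝ) 1) {n : ℕ}
    (P : (Fin n → Bool) × (Fin n → Bool) → Prop)
    (x : (Fin n → Bool) × (Fin n → Bool) → ℤ) (s : Finset ℤ)
    (himp : ∀ AB, P AB → x AB ∈ s) :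
    pairProb q n P ≤ ∑ d ∈ s, pairProb q n (fun AB => x AB = d) := by
  classical
  calc pairProb q n P
      ≤ ∑ AB : (Fin n → Bool) × (Fin n → Bool),
          ∑ d ∈ s, if x AB = d then pairWeight q n AB else 0 := by
        unfold pairProb
        apply Finset.sum_le_sum
        intro AB _
        by_cases hP : P AB
        · rw [if_pos hP,
            Finset.sum_ite_eq s (x AB) (fun _ => pairWeight q n AB), if_pos (himp AB hP)]
        · rw [if_neg hP]
          exact Finset.sum_nonneg (fun d _ => by
            split_ifs with h
            · exact pairWeight_nonneg q hq AB
            · exact le_refl 0)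
    _ = ∑ d ∈ s, ∑ AB : (Fin n → Bool) × (Fin n → Bool),
          if x AB = d then pairWeight q n AB else 0 := Finset.sum_comm
    _ = ∑ d ∈ s, pairProb q n (fun AB => x AB = d) := by
        apply Finset.sum_congr rfl; intro d _
        unfold pairProb
        apply Finset.sum_congr rfl; intro AB _
        by_cases h : x AB = d <;> simp [h]

lemma pairProb_fiber_le (hq : q ∈ Set.Ioo (0:ℝ) 1) {n : ℕ} (d : ℤ) :
    pairProb q n (fun AB => (bp AB.1 : ℤ) - (bp AB.2 : ℤ) = d) ≤ Mx q n := by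
  classical
  have hrw : pairProb q n (fun AB => (bp AB.1 : ℤ) - (bp AB.2 : ℤ) = d)
      = ∑ A : Fin n → Bool, ∑ B : Fin n → Bool,
          if (bp A : ℤ) - (bp B : ℤ) = d then pairWeight q n (A, B) else 0 := by
    unfold pairProb
    rw [Fintype.sum_prod_type]
    exact Finset.sum_congr rfl fun A _ => Finset.sum_congr rfl fun B _ => by
      by_cases h : (bp A : ℤ) - (bp B : ℤ) = d <;> simp [h]
  rw [hrw]
  have inner : ∀ A : Fin n → Bool,
      (∑ B : Fin n → Bool, if (bp A : ℤ) - (bp B : ℤ) = d then pairWeight q n (A, B) else 0)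
        ≤ W q A * Mx q n := by
    intro A
    rcases le_or_gt 0 ((bp A : ℤ) - d) with hge | hlt
    · set t := ((bp A : ℤ) - d).toNat with ht
      have hteq : ((t : ℕ) : ℤ) = (bp A : ℤ) - d := Int.toNat_of_nonneg hge
      have hiff : ∀ B : Fin n → Bool, ((bp A : ℤ) - (bp B : ℤ) = d) ↔ bp B = t := by
        intro B; omega
      calc (∑ B : Fin n → Bool, if (bp A : ℤ) - (bp B : ℤ) = d then pairWeight q n (A, B) else 0)
          = ∑ B : Fin n → Bool, if bp B = t then W q A * W q B else 0 := by
            apply Finset.sum_congr rfl; intro B _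
            by_cases h : bp B = t
            · rw [if_pos ((hiff B).mpr h), if_pos h, pairWeight_eq]
            · rw [if_neg (fun hh => h ((hiff B).mp hh)), if_neg h]
        _ = W q A * ∑ B : Fin n → Bool, if bp B = t then W q B else 0 := by
            rw [Finset.mul_sum]
            apply Finset.sum_congr rfl; intro B _
            by_cases h : bp B = t <;> simp [h]
        _ = W q A * binom q n t := by rw [sum_W_bp]
        _ ≤ W q A * Mx q n :=
            mul_le_mul_of_nonneg_left (le_Mx q hq n t) (W_nonneg q hq A)
    · have : (∑ B : Fin n → Bool, if (bp A : ℤ) - (bp B : ℤ) = d then pairWeight q n (A, B) else 0) = 0 := by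
        apply Finset.sum_eq_zero
        intro B _
        rw [if_neg]
        intro h
        omega
      rw [this]
      exact mul_nonneg (W_nonneg q hq A) (Mx_nonneg q hq n)
  calc (∑ A : Fin n → Bool, ∑ B : Fin n → Bool,
        if (bp A : ℤ) - (bp B : ℤ) = d then pairWeight q n (A, B) else 0)
      ≤ ∑ A : Fin n → Bool, W q A * Mx q n := Finset.sum_le_sum (fun A _ => inner A)
    _ = (∑ A : Fin n → Bool, W q A) * Mx q n := by rw [← Finset.sum_mul]
    _ = Mx q n := by rw [sum_W_one]; ring

lemma bp_diff {n : ℕ} (A B : Fin n → Bool) :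
    (bp A : ℤ) - (bp B : ℤ) = (bpd A B : ℤ) - (bpd B A : ℤ) := by
  have h1 : (bp A : ℤ) = ∑ i : Fin n, (if A i = true then (1:ℤ) else 0) := by
    rw [bp, Finset.card_filter]; push_cast; rfl
  have h2 : (bp B : ℤ) = ∑ i : Fin n, (if B i = true then (1:ℤ) else 0) := by
    rw [bp, Finset.card_filter]; push_cast; rfl
  have h3 : (bpd A B : ℤ) = ∑ i : Fin n, (if A i = true ∧ B i = false then (1:ℤ) else 0) := by
    rw [bpd, Finset.card_filter]; push_cast; rfl
  have h4 : (bpd B A : ℤ) = ∑ i : Fin n, (if B i = true ∧ A i = false then (1:ℤ) else 0) := by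
    rw [bpd, Finset.card_filter]; push_cast; rfl
  rw [h1, h2, h3, h4, ← Finset.sum_sub_distrib, ← Finset.sum_sub_distrib]
  apply Finset.sum_congr rfl
  intro i _
  cases hA : A i <;> cases hB : B i <;> simp [hA, hB]

lemma bps_le {n : ℕ} (A B : Fin n → Bool) : bps A B ≤ n := by
  have h3 : bpd A B = ∑ i : Fin n, (if A i = true ∧ B i = false then 1 else 0) := by
    rw [bpd, Finset.card_filter]
  have h4 : bpd B A = ∑ i : Fin n, (if B i = true ∧ A i = false then 1 else 0) := by
    rw [bpd, Finset.card_filter]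
  have : bps A B = ∑ i : Fin n, ((if A i = true ∧ B i = false then 1 else 0)
      + (if B i = true ∧ A i = false then 1 else 0)) := by
    rw [bps, h3, h4, Finset.sum_add_distrib]
  rw [this]
  calc _ ≤ ∑ _i : Fin n, 1 := Finset.sum_le_sum (fun i _ => by
        cases hA : A i <;> cases hB : B i <;> simp [hA, hB])
    _ = n := by simp

end NJaux

/-- Case 1 of the main theorem: fix `q ∈ (0,1)`, `0 < C_q < 2q(1−q)`, and set
`C_n* = R·T₀·ln 9/(0.3·C_q·n)` with `R = 0.001987`, `T₀ = 310`.  For every `ε > 0` there is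
`N` such that for all `n ≥ N` and all `0 < C ≤ C_n*`, with probability at least `1 − ε`
a random pair of structures satisfies `bp(A−B) ≤ (1/2 − C/4)·bp(AΔB)` or
`bp(B−A) ≤ (1/2 − C/4)·bp(AΔB)` (i.e., the crossover point lies outside `(0.25, 0.75)`). -/
theorem nj_case_one_uncentered_crossover (q Cq : ℝ) (hq : q ∈ Set.Ioo (0 : ℝ) 1)
    (hCq : 0 < Cq) (hCq' : Cq < 2 * q * (1 - q)) (ε : ℝ) (hε : 0 < ε) :
    ∃ N : ℕ, ∀ n : ℕ, N ≤ n → ∀ C : ℝ, 0 < C →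
      C ≤ 0.001987 * 310 * Real.log 9 / (0.3 * Cq * (n : ℝ)) →
      1 - ε ≤ pairProb q n (fun AB =>
        (bpd AB.1 AB.2 : ℝ) ≤ (1 / 2 - C / 4) * (bps AB.1 AB.2 : ℝ) ∨
        (bpd AB.2 AB.1 : ℝ) ≤ (1 / 2 - C / 4) * (bps AB.1 AB.2 : ℝ)) := by
  classical
  set K := 0.001987 * 310 * Real.log 9 / (0.3 * Cq) with hK
  have hlog : 0 < Real.log 9 := Real.log_pos (by norm_num)
  have hK0 : 0 < K := by rw [hK]; positivity
  set m := Nat.ceil K with hm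
  have hm1 : (0:ℝ) < 2*(m:ℝ)+1 := by positivity
  have hev := (NJaux.Mx_tendsto_zero q hq).eventually_lt_const
    (show (0:ℝ) < ε/(2*(m:ℝ)+1) by positivity)
  obtain ⟨N₀, hN₀⟩ := hev.exists_forall_of_atTop
  refine ⟨max N₀ 1, fun n hn C hC0 hCle => ?_⟩
  have hn1 : 1 ≤ n := le_trans (le_max_right _ _) hn
  have hnN : N₀ ≤ n := le_trans (le_max_left _ _) hn
  have hn0 : (0:ℝ) < (n:ℝ) := by exact_mod_cast hn1
  have hCn : C * n ≤ K := by
    have h1 : 0.001987 * 310 * Real.log 9 / (0.3 * Cq * (n:ℝ)) = K / n := by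
      rw [hK, div_div]
    rw [h1] at hCle
    exact (le_div_iff₀ hn0).mp hCle
  have himp : ∀ AB : (Fin n → Bool) × (Fin n → Bool),
      (¬ ((bpd AB.1 AB.2 : ℝ) ≤ (1 / 2 - C / 4) * (bps AB.1 AB.2 : ℝ) ∨
        (bpd AB.2 AB.1 : ℝ) ≤ (1 / 2 - C / 4) * (bps AB.1 AB.2 : ℝ))) →
      ((bp AB.1 : ℤ) - (bp AB.2 : ℤ)) ∈ Finset.Icc (-(m:ℤ)) (m:ℤ) := by
    rintro ⟨A, B⟩ hnE
    push_neg at hnE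
    obtain ⟨h1, h2⟩ := hnE
    simp only at h1 h2
    have hs : (bps A B : ℝ) = (bpd A B : ℝ) + (bpd B A : ℝ) := by
      rw [bps]; push_cast; ring
    have hsn : (bps A B : ℝ) ≤ (n:ℝ) := by exact_mod_cast NJaux.bps_le A B
    have hd : |((bpd A B : ℝ)) - (bpd B A : ℝ)| < C/2 * (bps A B : ℝ) := by
      rw [abs_lt]
      constructor <;> nlinarith
    have hKm : C/2 * (bps A B : ℝ) ≤ (m:ℝ) := by
      have hms : C/2 * (bps A B : ℝ) ≤ C/2 * (n:ℝ) :=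
        mul_le_mul_of_nonneg_left hsn (by linarith)
      have hceil := Nat.le_ceil K
      rw [← hm] at hceil
      linarith
    have habs : |((bp A : ℝ)) - (bp B : ℝ)| ≤ (m:ℝ) := by
      have hdiff : (bp A : ℝ) - (bp B : ℝ) = (bpd A B : ℝ) - (bpd B A : ℝ) := by
        exact_mod_cast NJaux.bp_diff A B
      rw [hdiff]
      have := abs_lt.mp hd
      rw [abs_le]
      constructor <;> linarith [this.1, this.2]
    rw [Finset.mem_Icc]
    have hz : |(bp A : ℤ) - (bp B : ℤ)| ≤ (m:ℤ) := by exact_mod_cast habs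
    exact abs_le.mp hz
  have hcompl : pairProb q n (fun AB =>
      ¬ ((bpd AB.1 AB.2 : ℝ) ≤ (1 / 2 - C / 4) * (bps AB.1 AB.2 : ℝ) ∨
        (bpd AB.2 AB.1 : ℝ) ≤ (1 / 2 - C / 4) * (bps AB.1 AB.2 : ℝ))) ≤ ε := by
    calc pairProb q n _
        ≤ ∑ d ∈ Finset.Icc (-(m:ℤ)) (m:ℤ),
            pairProb q n (fun AB => (bp AB.1 : ℤ) - (bp AB.2 : ℤ) = d) :=
          NJaux.pairProb_le_sum_fibers q hq _ _ _ himp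
      _ ≤ ∑ _d ∈ Finset.Icc (-(m:ℤ)) (m:ℤ), NJaux.Mx q n :=
          Finset.sum_le_sum (fun d _ => NJaux.pairProb_fiber_le q hq d)
      _ = ((Finset.Icc (-(m:ℤ)) (m:ℤ)).card : ℝ) * NJaux.Mx q n := by
          rw [Finset.sum_const, nsmul_eq_mul]
      _ = (2*(m:ℝ)+1) * NJaux.Mx q n := by
          rw [Int.card_Icc]
          have hc : ((m:ℤ) + 1 - -(m:ℤ)).toNat = 2*m+1 := by omega
          rw [hc]
          push_cast
          ring
      _ ≤ (2*(m:ℝ)+1) * (ε/(2*(m:ℝ)+1)) :=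
          mul_le_mul_of_nonneg_left (hN₀ n hnN).le (by positivity)
      _ = ε := by field_simp
  rw [NJaux.pairProb_compl q]
  linarith
end

section
/- (Case 2 of the main theorem.) Fix q ∈ (0,1), let C_q be any positive constant with C_q < 2q(1−q), set R = 0.001987, T₀ = 310, and C_n* = R·T₀·ln 9 / (0.3·C_q·n). Consider random structures A, B of length n whose 2n pairedness indicators are independent Bernoulli(q). Then for every ε > 0 there exists N such that for all n ≥ N and all C with C ≥ C_n*, the probability that R·T₀·ln 9 / (C·bp(AΔB)) ≤ 0.3 (i.e., that the upper bound on the crossover window length from the crossover window lemma is at most 0.3) is at least 1 − ε. -/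
/-!
Write `S = bp(AΔB)` as the number of positions `i` with `A i ≠ B i`. These disagreement
indicators are i.i.d. Bernoulli with mean `p = 2q(1−q)`, so `S` has mean `p n` and variance
`p(1−p) n`. If `C ≥ C_n*`, the event fails only when `S < C_q n`, i.e. when `S` falls
`(p − C_q) n` below its mean, and by Chebyshev's inequality this has probability at most
`p(1−p) / ((p − C_q)² n) → 0`.
-/

open Finset

section IidExpect

variable {α : Type*} [Fintype α] (w : α → ℝ) (n : ℕ)

noncomputable def iidExpect (f : (Fin n → α) → ℝ) : ℝ :=
  ∑ g : Fin n → α, (∏ i, w (g i)) * f g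

variable {w n}

theorem iidExpect_prod (φ : Fin n → α → ℝ) :
    iidExpect w n (fun g => ∏ i, φ i (g i)) = ∏ i, ∑ x, w x * φ i x := by
  simp only [iidExpect, ← prod_mul_distrib]
  exact (Fintype.prod_sum fun i x => w x * φ i x).symm

theorem iidExpect_sum {ι : Type*} (s : Finset ι) (f : ι → (Fin n → α) → ℝ) :
    iidExpect w n (fun g => ∑ k ∈ s, f k g) = ∑ k ∈ s, iidExpect w n (f k) := by
  simp only [iidExpect, mul_sum]
  exact sum_comm

theorem iidExpect_sub (f h : (Fin n → α) → ℝ) :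
    iidExpect w n (fun g => f g - h g) = iidExpect w n f - iidExpect w n h := by
  simp only [iidExpect, mul_sub, sum_sub_distrib]

theorem iidExpect_div_const (f : (Fin n → α) → ℝ) (c : ℝ) :
    iidExpect w n (fun g => f g / c) = iidExpect w n f / c := by
  simp only [iidExpect, mul_div_assoc', sum_div]

theorem iidExpect_mono (hw : ∀ x, 0 ≤ w x) {f h : (Fin n → α) → ℝ} (hfh : ∀ g, f g ≤ h g) :
    iidExpect w n f ≤ iidExpect w n h :=
  sum_le_sum fun g _ => mul_le_mul_of_nonneg_left (hfh g) (prod_nonneg fun i _ => hw (g i))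

theorem iidExpect_ite_mono (hw : ∀ x, 0 ≤ w x) {P Q : (Fin n → α) → Prop} [DecidablePred P]
    [DecidablePred Q] (hPQ : ∀ g, P g → Q g) :
    iidExpect w n (fun g => if P g then 1 else 0) ≤ iidExpect w n (fun g => if Q g then 1 else 0) :=
  iidExpect_mono hw fun g => by
    by_cases hP : P g
    · simp [hP, hPQ g hP]
    · by_cases hQ : Q g <;> simp [hP, hQ]

variable (hw : ∑ x, w x = 1)
include hw

theorem iidExpect_const (c : ℝ) : iidExpect w n (fun _ => c) = c := by
  rw [iidExpect, ← sum_mul, ← Fintype.prod_sum fun _ x => w x]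
  simp [hw]

theorem iidExpect_apply (φ : α → ℝ) (i : Fin n) :
    iidExpect w n (fun g => φ (g i)) = ∑ x, w x * φ x := by
  classical
  have h := iidExpect_prod (w := w) fun k x => if k = i then φ x else 1
  have hsum : ∀ k, ∑ x, w x * (if k = i then φ x else 1) = if k = i then ∑ x, w x * φ x else 1 :=
    fun k => by split_ifs <;> simp [hw]
  simpa only [hsum, prod_ite_eq', mem_univ, if_true] using h

theorem iidExpect_apply_mul_apply (φ ψ : α → ℝ) {i j : Fin n} (hij : i ≠ j) :
    iidExpect w n (fun g => φ (g i) * ψ (g j)) = (∑ x, w x * φ x) * ∑ x, w x * ψ x := by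
  classical
  let χ : Fin n → α → ℝ := fun k => if k = i then φ else if k = j then ψ else fun _ => 1
  have hχ : ∀ g : Fin n → α, ∏ k, χ k (g k) = φ (g i) * ψ (g j) := fun g => by
    rw [prod_eq_mul i j hij (by intro k _ hk; simp [χ, hk.1, hk.2]) (by simp) (by simp)]
    simp [χ, hij.symm]
  have h := iidExpect_prod (w := w) χ
  rw [prod_eq_mul i j hij (by intro k _ hk; simp [χ, hk.1, hk.2, hw]) (by simp) (by simp)] at h
  simpa [χ, hχ, hij.symm] using h

theorem iidExpect_sum_sq (ψ : α → ℝ) (hψ : ∑ x, w x * ψ x = 0) :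
    iidExpect w n (fun g => (∑ i, ψ (g i)) ^ 2) = n * ∑ x, w x * ψ x ^ 2 := by
  have hpair : ∀ i j : Fin n, iidExpect w n (fun g => ψ (g i) * ψ (g j))
      = if i = j then ∑ x, w x * ψ x ^ 2 else 0 := by
    intro i j
    split_ifs with hij
    · subst hij
      simp only [← sq]
      exact iidExpect_apply hw (fun x => ψ x ^ 2) i
    · rw [iidExpect_apply_mul_apply hw ψ ψ hij, hψ, zero_mul]
  have hexpand : ∀ g : Fin n → α, (∑ i, ψ (g i)) ^ 2 = ∑ i, ∑ j, ψ (g i) * ψ (g j) :=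
    fun g => by rw [sq, sum_mul_sum]
  simp only [hexpand, iidExpect_sum, hpair, sum_ite_eq, mem_univ, if_true, sum_const, card_univ,
    Fintype.card_fin, nsmul_eq_mul]

theorem one_sub_div_sq_le_iidExpect_ite (hw0 : ∀ x, 0 ≤ w x)
    (P : (Fin n → α) → Prop) [DecidablePred P] (X : (Fin n → α) → ℝ) {a : ℝ} (ha : 0 < a)
    (hX : ∀ g, ¬ P g → a ≤ |X g|) :
    1 - iidExpect w n (fun g => X g ^ 2) / a ^ 2
      ≤ iidExpect w n (fun g => if P g then 1 else 0) := by
  calc 1 - iidExpect w n (fun g => X g ^ 2) / a ^ 2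
      = iidExpect w n (fun g => 1 - X g ^ 2 / a ^ 2) := by
        rw [iidExpect_sub, iidExpect_const hw, iidExpect_div_const]
    _ ≤ _ := iidExpect_mono hw0 fun g => by
        split_ifs with hP
        · have : 0 ≤ X g ^ 2 / a ^ 2 := by positivity
          linarith
        · rw [sub_nonpos, one_le_div (by positivity)]
          exact sq_le_sq.mpr (by rw [abs_of_pos ha]; exact hX g hP)

theorem one_sub_div_le_iidExpect_mul_le_sum (hw0 : ∀ x, 0 ≤ w x) (φ : α → ℝ) {t : ℝ}
    (ht : t < ∑ x, w x * φ x) (hn : 0 < n) :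
    1 - (∑ x, w x * (φ x - ∑ y, w y * φ y) ^ 2) / ((∑ x, w x * φ x - t) ^ 2 * n)
      ≤ iidExpect w n (fun g => if t * n ≤ ∑ i, φ (g i) then 1 else 0) := by
  set m := ∑ x, w x * φ x
  have hn' : (0 : ℝ) < n := Nat.cast_pos.mpr hn
  have hcentered : ∑ x, w x * (φ x - m) = 0 := by
    simp only [mul_sub, sum_sub_distrib, ← sum_mul, hw, one_mul]
    exact sub_self m
  have hdeviation : ∀ g : Fin n → α, ¬ t * n ≤ ∑ i, φ (g i) →
      (m - t) * n ≤ |∑ i, (φ (g i) - m)| := fun g hg => by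
    rw [sum_sub_distrib, sum_const, card_univ, Fintype.card_fin, nsmul_eq_mul, abs_sub_comm]
    exact le_trans (by linarith) (le_abs_self _)
  have h := one_sub_div_sq_le_iidExpect_ite hw hw0 _ _ (mul_pos (sub_pos.mpr ht) hn') hdeviation
  rw [iidExpect_sum_sq hw _ hcentered] at h
  convert h using 2
  field_simp

end IidExpect

noncomputable def siteWeight (q : ℝ) (x : Bool × Bool) : ℝ :=
  (if x.1 then q else 1 - q) * (if x.2 then q else 1 - q)

def disagree (x : Bool × Bool) : ℝ := if x.1 = x.2 then 0 else 1

theorem siteWeight_nonneg {q : ℝ} (hq0 : 0 ≤ q) (hq1 : q ≤ 1) (x : Bool × Bool) :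
    0 ≤ siteWeight q x := by
  have : 0 ≤ 1 - q := by linarith
  unfold siteWeight
  split_ifs <;> positivity

theorem sum_siteWeight (q : ℝ) : ∑ x, siteWeight q x = 1 := by
  simp [Fintype.sum_prod_type, siteWeight]
  ring

theorem sum_siteWeight_mul_disagree (q : ℝ) :
    ∑ x, siteWeight q x * disagree x = 2 * q * (1 - q) := by
  simp [Fintype.sum_prod_type, siteWeight, disagree]
  ring

theorem sum_siteWeight_mul_disagree_sub_sq (q : ℝ) :
    ∑ x, siteWeight q x * (disagree x - 2 * q * (1 - q)) ^ 2
      = 2 * q * (1 - q) * (1 - 2 * q * (1 - q)) := by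
  simp [Fintype.sum_prod_type, siteWeight, disagree]
  ring

theorem bps_eq_sum_disagree {n : ℕ} (A B : Fin n → Bool) :
    (bps A B : ℝ) = ∑ i, disagree (A i, B i) := by
  simp only [bps, bpd, card_filter]
  push_cast
  rw [← sum_add_distrib]
  refine sum_congr rfl fun i _ => ?_
  cases A i <;> cases B i <;> simp [disagree]

open Classical in
theorem pairProb_eq_iidExpect (q : ℝ) (n : ℕ) (P : (Fin n → Bool) × (Fin n → Bool) → Prop) :
    pairProb q n P = iidExpect (siteWeight q) n
      (fun g => if P (fun i => (g i).1, fun i => (g i).2) then 1 else 0) := by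
  rw [pairProb, iidExpect,
    ← Equiv.sum_comp (Equiv.arrowProdEquivProdArrow (Fin n) (fun _ => Bool) (fun _ => Bool))]
  refine sum_congr rfl fun g _ => ?_
  rw [mul_ite, mul_one, mul_zero, pairWeight, ← prod_mul_distrib]
  rfl

/-- Case 2 of the main theorem: fix `q ∈ (0,1)`, `0 < C_q < 2q(1−q)`, and set
`C_n* = R·T₀·ln 9/(0.3·C_q·n)` with `R = 0.001987`, `T₀ = 310`.  For every `ε > 0` there is
`N` such that for all `n ≥ N` and all `C ≥ C_n*`, with probability at least `1 − ε` a
random pair of structures satisfies `R·T₀·ln 9/(C·bp(AΔB)) ≤ 0.3`, i.e.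
`bp(AΔB) ≥ R·T₀·ln 9/(0.3·C)`. -/
theorem nj_case_two_short_window (q Cq : ℝ) (hq : q ∈ Set.Ioo (0 : ℝ) 1)
    (hCq : 0 < Cq) (hCq' : Cq < 2 * q * (1 - q)) (ε : ℝ) (hε : 0 < ε) :
    ∃ N : ℕ, ∀ n : ℕ, N ≤ n → ∀ C : ℝ,
      0.001987 * 310 * Real.log 9 / (0.3 * Cq * (n : ℝ)) ≤ C →
      1 - ε ≤ pairProb q n (fun AB =>
        0.001987 * 310 * Real.log 9 / (0.3 * C) ≤ (bps AB.1 AB.2 : ℝ)) := by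
  obtain ⟨hq0, hq1⟩ := hq
  set p := 2 * q * (1 - q)
  set K : ℝ := 0.001987 * 310 * Real.log 9
  obtain ⟨N, hN⟩ := exists_nat_gt (p * (1 - p) / ((p - Cq) ^ 2 * ε))
  refine ⟨N + 1, fun n hNn C hC => ?_⟩
  have hn : 0 < n := Nat.zero_lt_of_lt hNn
  have hNn : (N : ℝ) ≤ n := by exact_mod_cast (Nat.le_succ N).trans hNn
  have hthreshold : K / (0.3 * C) ≤ Cq * n := by
    have hC0 : 0 < C := lt_of_lt_of_le (by positivity) hC
    rw [div_le_comm₀ (by positivity) hC0, div_le_iff₀ hC0] at hC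
    rw [div_le_iff₀ (by positivity)]
    linarith
  have hvariance : p * (1 - p) / ((p - Cq) ^ 2 * n) ≤ ε := by
    have hgap : 0 < p - Cq := sub_pos.mpr hCq'
    rw [div_lt_iff₀ (by positivity)] at hN
    rw [div_le_iff₀ (by positivity)]
    nlinarith [mul_le_mul_of_nonneg_left hNn (by positivity : (0 : ℝ) ≤ (p - Cq) ^ 2 * ε)]
  have hchebyshev := one_sub_div_le_iidExpect_mul_le_sum (sum_siteWeight q)
    (siteWeight_nonneg hq0.le hq1.le) disagree (t := Cq) (by rwa [sum_siteWeight_mul_disagree]) hn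
  rw [sum_siteWeight_mul_disagree, sum_siteWeight_mul_disagree_sub_sq] at hchebyshev
  rw [pairProb_eq_iidExpect]
  refine le_trans (by linarith) (hchebyshev.trans (iidExpect_ite_mono
    (siteWeight_nonneg hq0.le hq1.le) fun g hg => ?_))
  rw [bps_eq_sum_disagree]
  exact hthreshold.trans hg
end
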